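/- Let p ≥ 1 and let H be the p×p real matrix with H(i,j) = 2·1{i=j} − 1{|i−j|=1} − 1{i=j=p}. Then for every nonempty subset V ⊆ {1,...,p} with |V| = k, the principal submatrix H^{V,V} is symmetric positive definite and its smallest eigenvalue satisfies λ_min(H^{V,V}) ≥ 2/(k² + k). -/

import Mathlib

/-!
Write `H = Dᵀ D` with `D` the backward difference matrix, so that for `x` supported on `V`
(extended by zero to `ℤ` as `y`) the quadratic form is `∑ₙ (y n - y (n - 1))²`. For `n ∈ V`, let
`r n` be the length of the run of consecutive elements of `V` ending at `n`; since `y` vanishes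
just before that run, `y n` telescopes into the `r n` differences along it, and Cauchy–Schwarz gives
`y n ² ≤ r n · ∑_{run} (Δy)²`. A given difference `(Δy) i` occurs in the runs ending at
`i, i + 1, …`, whose lengths are distinct numbers in `[1, k]`, so its total weight is at most
`k (k + 1) / 2`.
-/

open Matrix

/-- The `p×p` matrix `H` with `H(i,j) = 2·1{i=j} − 1{|i−j|=1} − 1{i=j=p}` (1-indexed;
rows and columns indexed by `Fin p`, the last index corresponding to `p`). -/
noncomputable def hCP (p : ℕ) : Matrix (Fin p) (Fin p) ℝ :=
  Matrix.of fun i j =>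
    2 * (if i = j then 1 else 0) - (if |((i : ℕ) : ℤ) - ((j : ℕ) : ℤ)| = 1 then 1 else 0)
      - (if i = j ∧ (i : ℕ) = p - 1 then 1 else 0)

open Finset

namespace Finset

variable (S : Finset ℤ)

theorem exists_sub_notMem (n : ℤ) : ∃ r : ℕ, n - r ∉ S := by
  obtain ⟨a, ha⟩ := S.bddBelow
  exact ⟨(n - a + 1).toNat, fun h => by have := ha h; omega⟩

noncomputable def runLength (n : ℤ) : ℕ := Nat.find (S.exists_sub_notMem n)

noncomputable def run (n : ℤ) : Finset ℤ := Ioc (n - S.runLength n) n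

variable {S}

theorem sub_mem_of_lt_runLength {n : ℤ} {t : ℕ} (ht : t < S.runLength n) : n - t ∈ S :=
  not_not.mp (Nat.find_min _ ht)

theorem sub_runLength_notMem (n : ℤ) : n - S.runLength n ∉ S :=
  Nat.find_spec (S.exists_sub_notMem n)

theorem run_subset (n : ℤ) : S.run n ⊆ S := by
  intro i hi
  rw [run, mem_Ioc] at hi
  have := sub_mem_of_lt_runLength (S := S) (n := n) (t := (n - i).toNat) (by omega)
  rwa [Int.toNat_of_nonneg (by omega), sub_sub_cancel] at this

theorem card_run (n : ℤ) : #(S.run n) = S.runLength n := by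
  simp [run]

theorem runLength_le_card (n : ℤ) : S.runLength n ≤ #S :=
  card_run (S := S) n ▸ card_le_card (run_subset n)

theorem sub_runLength_of_mem_run {i n : ℤ} (hi : i ∈ S.run n) :
    i - S.runLength i = n - S.runLength n := by
  rw [run, mem_Ioc] at hi
  have hlen : S.runLength i = S.runLength n - (n - i).toNat :=
    (Nat.find_eq_iff (S.exists_sub_notMem i)).mpr ⟨?_, fun s hs => not_not.mpr ?_⟩
  · omega
  · convert sub_runLength_notMem (S := S) n using 2
    omega
  · convert sub_mem_of_lt_runLength (S := S) (n := n) (t := s + (n - i).toNat) (by omega) using 1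
    omega

theorem sum_run_sub {Y : ℤ → ℝ} (hY : ∀ m ∉ S, Y m = 0) (n : ℤ) :
    ∑ i ∈ S.run n, (Y i - Y (i - 1)) = Y n := by
  have hstart := hY _ (sub_runLength_notMem n)
  rw [run, Int.Ioc_eq_finset_map, sum_map]
  generalize S.runLength n = r at hstart ⊢
  rw [show (n - (n - r)).toNat = r by omega]
  convert sum_range_sub (fun k : ℕ => Y (n - r + k)) r using 1
  · refine sum_congr rfl fun k _ => ?_
    simp only [Function.Embedding.trans_apply, Nat.castEmbedding_apply, addLeftEmbedding_apply]
    push_cast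
    ring_nf
  · simp [hstart]

theorem two_mul_sum_runLength_le (i : ℤ) :
    2 * ∑ n ∈ S with i ∈ S.run n, S.runLength n ≤ #S * (#S + 1) := by
  set T := {n ∈ S | i ∈ S.run n}
  have hinj : Set.InjOn S.runLength T := by
    intro a ha b hb hab
    have ha' := sub_runLength_of_mem_run (mem_filter.mp ha).2
    have hb' := sub_runLength_of_mem_run (mem_filter.mp hb).2
    omega
  have himage : T.image S.runLength ⊆ range (#S + 1) := by
    simp only [image_subset_iff, mem_range, Nat.lt_succ_iff]
    exact fun n _ => runLength_le_card n
  calc 2 * ∑ n ∈ T, S.runLength n = (∑ m ∈ T.image S.runLength, m) * 2 := by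
        rw [sum_image hinj, mul_comm]
    _ ≤ (∑ m ∈ range (#S + 1), m) * 2 := by gcongr
    _ = #S * (#S + 1) := by rw [sum_range_id_mul_two, Nat.add_sub_cancel, mul_comm]

theorem two_mul_sum_sq_le {Y : ℤ → ℝ} (hY : ∀ m ∉ S, Y m = 0) :
    2 * ∑ n ∈ S, Y n ^ 2 ≤ #S * (#S + 1) * ∑ n ∈ S, (Y n - Y (n - 1)) ^ 2 := by
  set d : ℤ → ℝ := fun i => (Y i - Y (i - 1)) ^ 2
  have hcs (n : ℤ) : Y n ^ 2 ≤ S.runLength n * ∑ i ∈ S.run n, d i := by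
    rw [← sum_run_sub hY n, ← card_run]
    exact sq_sum_le_card_mul_sum_sq
  have hcoeff (i : ℤ) : 2 * ∑ n ∈ S with i ∈ S.run n, (S.runLength n : ℝ) ≤ #S * (#S + 1) := by
    exact_mod_cast two_mul_sum_runLength_le i
  calc 2 * ∑ n ∈ S, Y n ^ 2 ≤ 2 * ∑ n ∈ S, ∑ i ∈ S.run n, S.runLength n * d i := by
        simp only [← mul_sum]
        gcongr with n
        exact hcs n
    _ = ∑ i ∈ S, (2 * ∑ n ∈ S with i ∈ S.run n, (S.runLength n : ℝ)) * d i := by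
        rw [sum_comm' (t' := S) (s' := fun i => {n ∈ S | i ∈ S.run n})]
        · simp only [mul_sum, sum_mul, mul_assoc]
        · intro n i
          simp only [mem_filter]
          have hsub := @run_subset S n i
          tauto
    _ ≤ ∑ i ∈ S, #S * (#S + 1) * d i := by
        gcongr ∑ i ∈ S, ?_ with i
        exact mul_le_mul_of_nonneg_right (hcoeff i) (sq_nonneg _)
    _ = #S * (#S + 1) * ∑ n ∈ S, d n := by rw [mul_sum]

end Finset

theorem Function.Injective.sum_ite_eq_extend {α β M : Type*} [Fintype α] [DecidableEq β]
    [AddCommMonoid M] {f : α → β} (hf : f.Injective) (x : α → M) (b : β) :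
    ∑ a, (if f a = b then x a else 0) = Function.extend f x 0 b := by
  by_cases h : ∃ a, f a = b
  · obtain ⟨a, rfl⟩ := h
    rw [hf.extend_apply, sum_eq_single a (fun b _ hb => if_neg (hf.ne hb)) (by simp), if_pos rfl]
  · rw [Function.extend_apply' _ _ _ h, Pi.zero_apply]
    exact sum_eq_zero fun a _ => if_neg fun ha => h ⟨a, ha⟩

def diffMatrix (p : ℕ) : Matrix (Fin p) (Fin p) ℝ :=
  of fun n i => (if (n : ℕ) = i then 1 else 0) - (if (n : ℕ) = i + 1 then 1 else 0)

theorem hCP_eq_transpose_mul (p : ℕ) : hCP p = (diffMatrix p)ᵀ * diffMatrix p := by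
  ext i j
  rw [mul_apply]
  simp only [transpose_apply, diffMatrix, of_apply]
  rw [Fin.sum_univ_eq_sum_range (fun n => ((if n = (i : ℕ) then (1 : ℝ) else 0) -
    (if n = i + 1 then 1 else 0)) * ((if n = (j : ℕ) then 1 else 0) - (if n = j + 1 then 1 else 0)))]
  simp only [mul_sub, mul_ite, mul_one, mul_zero, sum_sub_distrib, sum_ite_eq', mem_range,
    hCP, of_apply, Fin.ext_iff]
  have habs : |((i : ℕ) : ℤ) - (j : ℕ)| = 1 ↔ (j : ℕ) = i + 1 ∨ (i : ℕ) = j + 1 := by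
    rw [abs_eq zero_le_one]
    omega
  rw [if_congr habs rfl rfl]
  have := i.isLt
  have := j.isLt
  split_ifs <;> first | omega | norm_num

theorem isHermitian_hCP (p : ℕ) : (hCP p).IsHermitian := by
  rw [hCP_eq_transpose_mul, ← conjTranspose_eq_transpose_of_trivial]
  exact isHermitian_conjTranspose_mul_self _

def coeIntEmbedding {p : ℕ} (V : Finset (Fin p)) : V ↪ ℤ :=
  (Function.Embedding.subtype _).trans (Fin.valEmbedding.trans Nat.castEmbedding)

theorem mulVec_diffMatrix_submatrix {p : ℕ} {V : Finset (Fin p)} (x : V → ℝ) (n : Fin p) :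
    ((diffMatrix p).submatrix id (↑) *ᵥ x) n =
      Function.extend (coeIntEmbedding V) x 0 n - Function.extend (coeIntEmbedding V) x 0 (n - 1) := by
  have hf := (coeIntEmbedding V).injective
  rw [← hf.sum_ite_eq_extend, ← hf.sum_ite_eq_extend, ← sum_sub_distrib]
  refine sum_congr rfl fun i _ => ?_
  simp only [diffMatrix, coeIntEmbedding, submatrix_apply, id, of_apply, sub_mul, ite_mul, one_mul,
    zero_mul, Function.Embedding.trans_apply, Function.Embedding.subtype_apply,
    Fin.valEmbedding_apply, Nat.castEmbedding_apply]
  congr 2 <;> apply propext <;> omega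

theorem two_mul_sum_sq_le_dotProduct_submatrix_hCP (p : ℕ) (V : Finset (Fin p)) (x : V → ℝ) :
    2 * ∑ i, x i ^ 2 ≤
      #V * (#V + 1) * (x ⬝ᵥ ((hCP p).submatrix (↑) (↑) *ᵥ x)) := by
  set y := Function.extend (coeIntEmbedding V) x 0
  set S : Finset ℤ := univ.map (coeIntEmbedding V)
  have hy : ∀ m ∉ S, y m = 0 := fun m hm =>
    Function.extend_apply' _ _ _ fun ⟨i, hi⟩ => hm (mem_map.mpr ⟨i, mem_univ _, hi⟩)
  set C := (diffMatrix p).submatrix id ((↑) : V → Fin p)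
  have hH : (hCP p).submatrix (↑) (↑) = Cᵀ * C := by
    rw [hCP_eq_transpose_mul, submatrix_mul _ _ _ id _ Function.bijective_id, transpose_submatrix]
  have hS (g : ℤ → ℝ) : ∑ n ∈ S, g n = ∑ j ∈ V, g j := by
    rw [sum_map]
    exact sum_coe_sort V fun j : Fin p => g j
  calc 2 * ∑ i, x i ^ 2 = 2 * ∑ n ∈ S, y n ^ 2 := by
        simp only [S, sum_map, y, (coeIntEmbedding V).injective.extend_apply]
    _ ≤ #S * (#S + 1) * ∑ n ∈ S, (y n - y (n - 1)) ^ 2 := two_mul_sum_sq_le hy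
    _ ≤ #V * (#V + 1) * ∑ n : Fin p, (y n - y (n - 1)) ^ 2 := by
        rw [card_map, card_univ, Fintype.card_coe, hS]
        exact mul_le_mul_of_nonneg_left (sum_le_univ_sum_of_nonneg fun _ => sq_nonneg _)
          (by positivity)
    _ = #V * (#V + 1) * (x ⬝ᵥ ((hCP p).submatrix (↑) (↑) *ᵥ x)) := by
        rw [hH, ← mulVec_mulVec, dotProduct_mulVec, vecMul_transpose]
        simp only [dotProduct, C, mulVec_diffMatrix_submatrix, y, sq]

theorem stmt_14_general (p : ℕ) (V : Finset (Fin p)) :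
    ((hCP p).submatrix (fun i : V => (i : Fin p)) (fun j : V => (j : Fin p))).PosDef ∧
    ∀ x : V → ℝ,
      (2 / ((V.card : ℝ) ^ 2 + (V.card : ℝ))) * ∑ i, x i ^ 2 ≤
        x ⬝ᵥ ((hCP p).submatrix (fun i : V => (i : Fin p)) (fun j : V => (j : Fin p)) *ᵥ x) := by
  have hkey := two_mul_sum_sq_le_dotProduct_submatrix_hCP p V
  have hpos : ((hCP p).submatrix (fun i : V => (i : Fin p)) (fun j : V => (j : Fin p))).PosDef := by
    refine posDef_iff_dotProduct_mulVec.mpr ⟨(isHermitian_hCP p).submatrix _, fun x hx => ?_⟩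
    have hsq : 0 < ∑ i, x i ^ 2 := by
      obtain ⟨i, hi⟩ := Function.ne_iff.mp hx
      exact sum_pos' (fun j _ => sq_nonneg (x j)) ⟨i, mem_univ _, pow_two_pos_of_ne_zero hi⟩
    rw [star_trivial]
    exact pos_of_mul_pos_right (a := (#V : ℝ) * (#V + 1)) (by linarith [hkey x]) (by positivity)
  refine ⟨hpos, fun x => ?_⟩
  rw [div_mul_eq_mul_div]
  refine div_le_of_le_mul₀ (by positivity) (hpos.posSemidef.dotProduct_mulVec_nonneg x) ?_
  linarith [hkey x]

/-- For every nonempty `V ⊆ {1,...,p}` with `|V| = k`, the principal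
submatrix `H^{V,V}` is symmetric positive definite and its smallest eigenvalue is at least
`2/(k² + k)`; equivalently, `x' H^{V,V} x ≥ (2/(k²+k)) ‖x‖²` for all `x`. -/
theorem stmt_14 (p : ℕ) (hp : 1 ≤ p) (V : Finset (Fin p)) (hV : V.Nonempty) :
    ((hCP p).submatrix (fun i : V => (i : Fin p)) (fun j : V => (j : Fin p))).PosDef ∧
    ∀ x : V → ℝ,
      (2 / ((V.card : ℝ) ^ 2 + (V.card : ℝ))) * ∑ i, x i ^ 2 ≤
        x ⬝ᵥ ((hCP p).submatrix (fun i : V => (i : Fin p)) (fun j : V => (j : Fin p)) *ᵥ x) :=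
  stmt_14_general p V
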